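/- For every nonempty compact metric space X and every ε > 0, there exists a nonempty finite metric space F whose distance function is injective and whose Gromov–Hausdorff distance to X is less than ε. -/

import Mathlib

/-!
Take a finite `ε/2`-net `t` of `X`; it is `ε/2`-close to `X`. Choose `c > 0` below every nonzero
gap `|d(x, y) - d(x', y')|` between distances in `t`, and raise the distance of each unordered pair
`{x, y}` of distinct points by its own amount `δ{x, y} ∈ (c, 2c)`. The triangle inequality survives
because `δ{x, z} < 2c < δ{x, y} + δ{y, z}`. Two pairs with equal new distances have equal old
distances, since the old ones differ by less than `c`, hence equal `δ`, hence coincide. The new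
metric is within `2c` of the old one, so it is `c`-close to `t` in the Gromov–Hausdorff sense.
-/

/-- The distance function of a metric space is injective: it is one-to-one on unordered pairs of
distinct points. -/
def InjectiveDist (X : Type*) [MetricSpace X] : Prop :=
  ∀ x y x' y' : X, x ≠ y → x' ≠ y' → dist x y = dist x' y' → ({x, y} : Set X) = {x', y'}

open Set Filter Topology GromovHausdorff

universe u

lemma exists_pos_le_abs_sub_of_ne {ι : Type*} [Finite ι] (f : ι → ℝ) :
    ∃ c > 0, ∀ i j, f i ≠ f j → c ≤ |f i - f j| := by
  have hfar : ∀ i j, ∀ᶠ c in 𝓝[>] (0 : ℝ), f i ≠ f j → c ≤ |f i - f j| := fun i j => by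
    by_cases hij : f i = f j
    · exact .of_forall fun _ h => absurd hij h
    · filter_upwards [nhdsWithin_le_nhds (eventually_lt_nhds (abs_pos.2 (sub_ne_zero.2 hij)))]
        with c hc _ using hc.le
  obtain ⟨c, hc, hgap⟩ := (eventually_mem_nhdsWithin.and
    (eventually_all.2 fun i => eventually_all.2 (hfar i))).exists
  exact ⟨c, hc, hgap⟩

lemma exists_injective_forall_mem_Ioo {β α : Type*} [Countable β] [LinearOrder α]
    [DenselyOrdered α] {a b : α} (hab : a < b) :
    ∃ f : β → α, Function.Injective f ∧ ∀ p, f p ∈ Ioo a b := by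
  obtain ⟨g, hg⟩ := Countable.exists_injective_nat β
  have := Ioo.infinite hab
  let φ := Infinite.natEmbedding (Ioo a b)
  exact ⟨fun p => φ (g p), Subtype.val_injective.comp (φ.injective.comp hg), fun p => (φ (g p)).2⟩

theorem GromovHausdorff.ghDist_le_of_forall_exists_dist_le {X : Type*} [MetricSpace X]
    [CompactSpace X] [Nonempty X] (s : Set X) [CompactSpace s] [Nonempty s] {r : ℝ}
    (hs : ∀ x, ∃ y ∈ s, dist x y ≤ r) : ghDist X s ≤ r := by
  simpa using ghDist_le_of_approx_subsets (s := s) (ε₂ := 0) (ε₃ := 0) id hs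
    (fun y => ⟨y, by simp⟩) (fun x y => by simp)

theorem GromovHausdorff.ghDist_le_of_equiv {X Y : Type*} [MetricSpace X] [CompactSpace X]
    [Nonempty X] [MetricSpace Y] [CompactSpace Y] [Nonempty Y] (e : X ≃ Y) {η : ℝ}
    (he : ∀ x y, |dist (e x) (e y) - dist x y| ≤ η) : ghDist X Y ≤ η / 2 := by
  simpa using ghDist_le_of_approx_subsets (s := univ) (ε₁ := 0) (ε₃ := 0) (fun x => e x)
    (fun x => ⟨x, mem_univ x, by simp⟩) (fun y => ⟨⟨e.symm y, mem_univ _⟩, by simp⟩)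
    (fun x y => by rw [abs_sub_comm]; exact he x y)

section Perturbation

variable {α : Type u} [MetricSpace α] {δ : Sym2 α → ℝ} {c : ℝ} {x y x' y' : α}

open Classical in
noncomputable def perturbedDist (δ : Sym2 α → ℝ) (x y : α) : ℝ :=
  if x = y then 0 else dist x y + δ s(x, y)

@[simp]
lemma perturbedDist_self (δ : Sym2 α → ℝ) (x : α) : perturbedDist δ x x = 0 := by
  simp [perturbedDist]

lemma perturbedDist_of_ne (h : x ≠ y) : perturbedDist δ x y = dist x y + δ s(x, y) := by
  simp [perturbedDist, h]

lemma perturbedDist_comm (δ : Sym2 α → ℝ) (x y : α) :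
    perturbedDist δ x y = perturbedDist δ y x := by
  rcases eq_or_ne x y with rfl | h
  · rfl
  · rw [perturbedDist_of_ne h, perturbedDist_of_ne h.symm, dist_comm, Sym2.eq_swap]

lemma perturbedDist_pos (hδ : ∀ p, δ p ∈ Icc c (2 * c)) (h : x ≠ y) :
    0 < perturbedDist δ x y := by
  rw [perturbedDist_of_ne h]
  linarith [dist_pos.2 h, (hδ s(x, y)).1, (hδ s(x, y)).2]

lemma perturbedDist_triangle (hδ : ∀ p, δ p ∈ Icc c (2 * c)) (x y z : α) :
    perturbedDist δ x z ≤ perturbedDist δ x y + perturbedDist δ y z := by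
  rcases eq_or_ne x y with rfl | hxy
  · simp
  rcases eq_or_ne y z with rfl | hyz
  · simp
  rcases eq_or_ne x z with rfl | hxz
  · simpa using add_nonneg (perturbedDist_pos hδ hxy).le (perturbedDist_pos hδ hyz).le
  rw [perturbedDist_of_ne hxy, perturbedDist_of_ne hyz, perturbedDist_of_ne hxz]
  linarith [dist_triangle x y z, (hδ s(x, z)).2, (hδ s(x, y)).1, (hδ s(y, z)).1]

lemma abs_perturbedDist_sub_dist_le (hδ : ∀ p, δ p ∈ Icc c (2 * c)) (x y : α) :
    |perturbedDist δ x y - dist x y| ≤ 2 * c := by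
  rcases eq_or_ne x y with rfl | h
  · simpa using (by linarith [(hδ s(x, x)).1, (hδ s(x, x)).2] : 0 ≤ c)
  · rw [perturbedDist_of_ne h, add_sub_cancel_left,
      abs_of_nonneg (by linarith [(hδ s(x, y)).1, (hδ s(x, y)).2])]
    exact (hδ s(x, y)).2

noncomputable abbrev perturbedMetric (hδ : ∀ p, δ p ∈ Icc c (2 * c)) : MetricSpace α where
  dist := perturbedDist δ
  dist_self := perturbedDist_self δ
  dist_comm := perturbedDist_comm δ
  dist_triangle := perturbedDist_triangle hδ
  eq_of_dist_eq_zero {x y} h := not_not.1 fun hxy => (perturbedDist_pos hδ hxy).ne' h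

lemma sym2_eq_of_perturbedDist_eq (hinj : Function.Injective δ)
    (hgap : ∀ x y x' y' : α, dist x y ≠ dist x' y' →
      |δ s(x, y) - δ s(x', y')| < |dist x y - dist x' y'|)
    (hxy : x ≠ y) (hx'y' : x' ≠ y') (h : perturbedDist δ x y = perturbedDist δ x' y') :
    s(x, y) = s(x', y') := by
  rw [perturbedDist_of_ne hxy, perturbedDist_of_ne hx'y'] at h
  by_cases hd : dist x y = dist x' y'
  · exact hinj (by linarith)
  · have := hgap x y x' y' hd
    rw [show δ s(x, y) - δ s(x', y') = -(dist x y - dist x' y') by linarith, abs_neg] at this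
    exact absurd this (lt_irrefl _)

lemma exists_equiv_injectiveDist_abs_dist_sub_le [Finite α] {η : ℝ} (hη : 0 < η) :
    ∃ (F : Type u) (_ : MetricSpace F) (e : α ≃ F),
      InjectiveDist F ∧ ∀ x y, |dist (e x) (e y) - dist x y| ≤ η := by
  obtain ⟨c₀, hc₀, hgap⟩ := exists_pos_le_abs_sub_of_ne fun p : α × α => dist p.1 p.2
  set c := min c₀ (η / 2)
  have hc : 0 < c := lt_min hc₀ (half_pos hη)
  obtain ⟨δ, hinj, hδ⟩ := exists_injective_forall_mem_Ioo (β := Sym2 α) (by linarith : c < 2 * c)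
  have hδ' : ∀ p, δ p ∈ Icc c (2 * c) := fun p => Ioo_subset_Icc_self (hδ p)
  refine ⟨α, perturbedMetric hδ', Equiv.refl α, fun x y x' y' hxy hx'y' h => ?_, fun x y => ?_⟩
  · refine pair_eq_pair_iff.2 <| Sym2.eq_iff.1 <|
      sym2_eq_of_perturbedDist_eq hinj (fun x y x' y' hd => ?_) hxy hx'y' h
    calc |δ s(x, y) - δ s(x', y')| < c := by
          rw [abs_sub_lt_iff]
          constructor <;> linarith [(hδ s(x, y)).1, (hδ s(x, y)).2, (hδ s(x', y')).1,
            (hδ s(x', y')).2]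
      _ ≤ c₀ := min_le_left _ _
      _ ≤ |dist x y - dist x' y'| := hgap (x, y) (x', y') hd
  · exact (abs_perturbedDist_sub_dist_le hδ' x y).trans (by linarith [min_le_right c₀ (η / 2)])

end Perturbation

/-- Every nonempty compact metric space is within Gromov–Hausdorff distance `ε` of a nonempty
finite metric space with injective distance function, for any `ε > 0`. -/
theorem exists_finite_injectiveDist_ghDist_lt (X : Type) [MetricSpace X] [CompactSpace X]
    [Nonempty X] (ε : ℝ) (hε : 0 < ε) :
    ∃ (F : Type) (_ : MetricSpace F) (_ : Finite F) (_ : Nonempty F),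
      InjectiveDist F ∧
      (letI : CompactSpace F := Finite.compactSpace
       GromovHausdorff.ghDist X F < ε) := by
  obtain ⟨t, -, htfin, htcover⟩ :=
    finite_cover_balls_of_compact (isCompact_univ (X := X)) (half_pos hε)
  have hnet : ∀ x : X, ∃ y ∈ t, dist x y ≤ ε / 2 := fun x => by
    obtain ⟨y, hy, hxy⟩ := mem_iUnion₂.1 (htcover (mem_univ x))
    exact ⟨y, hy, (Metric.mem_ball.1 hxy).le⟩
  have : Finite t := htfin
  have : Nonempty t := let ⟨y, hy, _⟩ := hnet (Classical.arbitrary X); ⟨⟨y, hy⟩⟩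
  obtain ⟨F, _, e, hinj, he⟩ := exists_equiv_injectiveDist_abs_dist_sub_le (α := t) (half_pos hε)
  have : Finite F := .of_equiv t e
  have : Nonempty F := e.nonempty_congr.1 ‹_›
  refine ⟨F, _, ‹_›, ‹_›, hinj, ?_⟩
  calc ghDist X F ≤ ghDist X t + ghDist (↥t) F := dist_triangle _ _ _
    _ ≤ ε / 2 + ε / 2 / 2 :=
      add_le_add (ghDist_le_of_forall_exists_dist_le t hnet) (ghDist_le_of_equiv e he)
    _ < ε := by linarith
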